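/- arXiv:2111.08076 — 4 statements merged into one kernel-verified Lean document; each statement's English description precedes it below -/
import Mathlib

section
/- Let n_1,...,n_d be positive integers and let φ be the mixed-radix digit map as above. If A ⊆ [0, n_1⋯n_d − 1] is a B_h set in ℤ, then φ(A) is a B_h set in ℤ^d contained in the box [0,n_1−1]×⋯×[0,n_d−1]. Consequently F_h(n_1⋯n_d) ≤ F_h(n_1,...,n_d). -/
/-- A subset `S` of an additive commutative monoid is a Sidon set if
`x+y = z+w` with all four in `S` implies `{x,y} = {z,w}`. -/
def IsSidon {G : Type*} [AddCommMonoid G] (S : Set G) : Prop :=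
  ∀ x y z w : G, x ∈ S → y ∈ S → z ∈ S → w ∈ S → x + y = z + w →
    ({x, y} : Set G) = ({z, w} : Set G)

/-- A subset `S` is a `B_h` set if any equality of two `h`-fold sums of elements
of `S` forces the two multisets of summands to coincide. -/
def IsBh {G : Type*} [AddCommMonoid G] (h : ℕ) (S : Set G) : Prop :=
  ∀ a b : Fin h → G, (∀ i, a i ∈ S) → (∀ i, b i ∈ S) →
    (∑ i, a i) = (∑ i, b i) →
    Multiset.map a Finset.univ.val = Multiset.map b Finset.univ.val

/-- `Fh1 h n` is the maximum size of a `B_h` set contained in `[1,n] ⊆ ℤ`. -/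
noncomputable def Fh1 (h n : ℕ) : ℕ :=
  sSup {k | ∃ A : Finset ℤ, A.card = k ∧ (A : Set ℤ) ⊆ Set.Icc 1 (n : ℤ) ∧
    IsBh h (A : Set ℤ)}

/-- `FhBox h n` is the maximum size of a `B_h` set contained in the box
`[1,n 1] × ⋯ × [1,n d] ⊆ ℤ^d`. -/
noncomputable def FhBox (h : ℕ) {d : ℕ} (n : Fin d → ℕ) : ℕ :=
  sSup {k | ∃ A : Finset (Fin d → ℤ), A.card = k ∧
    (∀ x ∈ A, ∀ i, x i ∈ Set.Icc 1 ((n i : ℤ))) ∧ IsBh h (A : Set (Fin d → ℤ))}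

/- ## Auxiliary lemmas -/

private lemma int_ediv_ediv (a : ℤ) {b c : ℤ} (hb : 0 < b) (hc : 0 < c) :
    a / b / c = a / (b * c) := by
  symm
  have h : 0 < b * c := mul_pos hb hc
  have key := (Int.ediv_emod_unique (a := a) (b := b * c) (q := a / b / c)
    (r := b * (a / b % c) + a % b) h).mpr
  have h1 : a % b + b * (a / b) = a := Int.emod_add_mul_ediv a b
  have h2 : a / b % c + c * (a / b / c) = a / b := Int.emod_add_mul_ediv (a / b) c
  have hm1 : 0 ≤ a % b := Int.emod_nonneg a hb.ne'
  have hm2 : 0 ≤ a / b % c := Int.emod_nonneg (a / b) hc.ne'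
  have hl1 : a % b < b := Int.emod_lt_of_pos a hb
  have hl2 : a / b % c < c := Int.emod_lt_of_pos (a / b) hc
  refine (key ⟨?_, ?_, ?_⟩).1
  · linear_combination b * h2 + h1
  · exact add_nonneg (mul_nonneg hb.le hm2) hm1
  · nlinarith [mul_le_mul_of_nonneg_left (by linarith : a / b % c ≤ c - 1) hb.le]

private def Pprod {d : ℕ} (n : Fin d → ℕ) (i : Fin d) : ℤ :=
  ∏ j ∈ Finset.univ.filter (fun j => j < i), (n j : ℤ)

private lemma Pprod_def {d : ℕ} (n : Fin d → ℕ) (i : Fin d) :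
    Pprod n i = ∏ j ∈ Finset.univ.filter (fun j => j < i), (n j : ℤ) := rfl

private lemma Pprod_pos {d : ℕ} (n : Fin d → ℕ) (hn : ∀ i, 0 < n i) (i : Fin d) :
    0 < Pprod n i :=
  Finset.prod_pos fun j _ => by exact_mod_cast hn j

private lemma Pprod_zero {d : ℕ} (n : Fin (d + 1) → ℕ) : Pprod n 0 = 1 := by
  unfold Pprod
  rw [Finset.filter_false_of_mem fun j _ => Fin.not_lt_zero j, Finset.prod_empty]

private lemma Pprod_succ {d : ℕ} (n : Fin (d + 1) → ℕ) (i : Fin d) :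
    Pprod n i.succ = (n 0 : ℤ) * Pprod (fun j => n j.succ) i := by
  unfold Pprod
  rw [Finset.prod_filter, Finset.prod_filter, Fin.prod_univ_succ]
  simp [Fin.succ_pos, Fin.succ_lt_succ_iff]

private lemma digits_sum : ∀ {d : ℕ} (n : Fin d → ℕ), (∀ i, 0 < n i) → ∀ a : ℤ,
    0 ≤ a → a < ∏ i, (n i : ℤ) →
    ∑ i, (a / Pprod n i % (n i : ℤ)) * Pprod n i = a := by
  intro d
  induction d with
  | zero =>
    intro n _ a h0 h1
    simp only [Finset.univ_eq_empty, Finset.prod_empty, Finset.sum_empty] at h1 ⊢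
    omega
  | succ d ih =>
    intro n hn a h0 h1
    have hn0 : (0 : ℤ) < (n 0 : ℤ) := by exact_mod_cast hn 0
    set M : ℤ := ∏ i : Fin d, ((n i.succ : ℕ) : ℤ) with hM
    have hM' : ∏ i, (n i : ℤ) = (n 0 : ℤ) * M := Fin.prod_univ_succ _
    have hdiv0 : 0 ≤ a / (n 0 : ℤ) := Int.ediv_nonneg h0 hn0.le
    have hdivlt : a / (n 0 : ℤ) < M := by
      rw [Int.ediv_lt_iff_lt_mul hn0, mul_comm]
      rw [hM'] at h1; exact h1
    have hIH := ih (fun j => n j.succ) (fun j => hn j.succ) (a / (n 0 : ℤ)) hdiv0 hdivlt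
    rw [Fin.sum_univ_succ]
    have hterm : ∀ i : Fin d,
        (a / Pprod n i.succ % (n i.succ : ℤ)) * Pprod n i.succ
          = (n 0 : ℤ) * (((a / (n 0 : ℤ)) / Pprod (fun j => n j.succ) i % (n i.succ : ℤ))
              * Pprod (fun j => n j.succ) i) := by
      intro i
      rw [Pprod_succ, ← int_ediv_ediv a hn0 (Pprod_pos _ (fun j => hn j.succ) i)]
      ring
    rw [Finset.sum_congr rfl fun i _ => hterm i, ← Finset.mul_sum, hIH, Pprod_zero]
    simpa using Int.emod_add_mul_ediv a (n 0 : ℤ)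

private lemma isBh_image {h d : ℕ} {A : Set ℤ} (hBh : IsBh h A) (ψ : ℤ → Fin d → ℤ)
    (hsum : ∀ a b : Fin h → ℤ, (∀ i, a i ∈ A) → (∀ i, b i ∈ A) →
      (∑ i, ψ (a i)) = ∑ i, ψ (b i) → (∑ i, a i) = ∑ i, b i) :
    IsBh h (ψ '' A) := by
  intro x y hx hy hxy
  choose a ha hax using hx
  choose b hb hbx using hy
  have hxa : x = fun i => ψ (a i) := funext fun i => (hax i).symm
  have hyb : y = fun i => ψ (b i) := funext fun i => (hbx i).symm
  subst hxa hyb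
  have hmul := hBh a b ha hb (hsum a b ha hb hxy)
  calc Multiset.map (fun i => ψ (a i)) Finset.univ.val
      = Multiset.map ψ (Multiset.map a Finset.univ.val) := by
        rw [Multiset.map_map]; rfl
    _ = Multiset.map ψ (Multiset.map b Finset.univ.val) := by rw [hmul]
    _ = Multiset.map (fun i => ψ (b i)) Finset.univ.val := by
        rw [Multiset.map_map]; rfl

private lemma sum_eval {d h : ℕ} (f g : Fin h → Fin d → ℤ)
    (hfg : (∑ k, f k) = ∑ k, g k) (P : Fin d → ℤ) :
    ∑ k, ∑ i, f k i * P i = ∑ k, ∑ i, g k i * P i := by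
  have key : ∀ F : Fin h → Fin d → ℤ,
      ∑ k, ∑ i, F k i * P i = ∑ i, ((∑ k, F k) i) * P i := by
    intro F
    rw [Finset.sum_comm]
    refine Finset.sum_congr rfl fun i _ => ?_
    rw [← Finset.sum_mul, Finset.sum_apply]
  rw [key, key, hfg]

theorem mixed_radix_image_bh (d h : ℕ) (n : Fin d → ℕ) (hn : ∀ i, 0 < n i)
    (φ : ℤ → Fin d → ℤ)
    (hφ : ∀ a : ℤ, ∀ i : Fin d,
      φ a i = (a / ∏ j ∈ Finset.univ.filter (fun j => j < i), (n j : ℤ)) % (n i : ℤ))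
    (A : Set ℤ) (hA : A ⊆ Set.Icc 0 ((∏ i, (n i : ℤ)) - 1))
    (hBh : IsBh h A) :
    IsBh h (φ '' A) ∧
    (φ '' A ⊆ Set.pi Set.univ fun i => Set.Icc 0 ((n i : ℤ) - 1)) ∧
    Fh1 h (∏ i, n i) ≤ FhBox h n := by
  have hni : ∀ i, (0 : ℤ) < (n i : ℤ) := fun i => by exact_mod_cast hn i
  -- recovery of `x` from its digits
  have hLφ : ∀ x : ℤ, 0 ≤ x → x < ∏ i, (n i : ℤ) →
      ∑ i, φ x i * Pprod n i = x := by
    intro x h0 h1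
    calc ∑ i, φ x i * Pprod n i
        = ∑ i, (x / Pprod n i % (n i : ℤ)) * Pprod n i :=
          Finset.sum_congr rfl fun i _ => by rw [hφ, Pprod_def]
      _ = x := digits_sum n hn x h0 h1
  -- box bounds for the digits
  have hbnd : ∀ x : ℤ, ∀ i, 0 ≤ φ x i ∧ φ x i < (n i : ℤ) := by
    intro x i
    rw [hφ]
    exact ⟨Int.emod_nonneg _ (hni i).ne', Int.emod_lt_of_pos _ (hni i)⟩
  refine ⟨?_, ?_, ?_⟩
  · -- φ '' A is B_h
    refine isBh_image hBh φ ?_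
    intro a b ha hb hab
    have hsum := sum_eval (fun k => φ (a k)) (fun k => φ (b k)) hab (Pprod n)
    have hva : ∀ k, ∑ i, φ (a k) i * Pprod n i = a k := fun k => by
      obtain ⟨h0, h1⟩ := hA (ha k); exact hLφ _ h0 (by omega)
    have hvb : ∀ k, ∑ i, φ (b k) i * Pprod n i = b k := fun k => by
      obtain ⟨h0, h1⟩ := hA (hb k); exact hLφ _ h0 (by omega)
    calc (∑ k, a k) = ∑ k, ∑ i, φ (a k) i * Pprod n i :=
          (Finset.sum_congr rfl fun k _ => (hva k).symm)
      _ = ∑ k, ∑ i, φ (b k) i * Pprod n i := hsum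
      _ = ∑ k, b k := Finset.sum_congr rfl fun k _ => hvb k
  · -- box membership
    rintro _ ⟨x, _, rfl⟩ i _
    obtain ⟨hb1, hb2⟩ := hbnd x i
    refine Set.mem_Icc.2 ⟨hb1, ?_⟩
    linarith
  · -- the inequality between extremal functions
    have hcast : ((∏ i, n i : ℕ) : ℤ) = ∏ i, (n i : ℤ) := by push_cast; rfl
    unfold Fh1 FhBox
    refine csSup_le_csSup ?_ ?_ ?_
    · -- BddAbove of box set
      refine ⟨(Fintype.piFinset fun i => Finset.Icc (1 : ℤ) (n i)).card, ?_⟩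
      rintro k ⟨B, rfl, hBmem, -⟩
      refine Finset.card_le_card fun x hx => ?_
      rw [Fintype.mem_piFinset]
      intro i
      rw [Finset.mem_Icc]
      exact Set.mem_Icc.1 (hBmem x hx i)
    · -- nonempty
      refine ⟨0, ∅, Finset.card_empty, by simp, ?_⟩
      intro a b ha hb _
      rcases Nat.eq_zero_or_pos h with rfl | hpos
      · simp
      · exact absurd (ha ⟨0, hpos⟩) (by simp)
    · -- every value achieved on [1,N] is achieved on the box
      rintro k ⟨A', rfl, hA'sub, hA'Bh⟩
      set ψ : ℤ → Fin d → ℤ := fun a i => φ (a - 1) i + 1 with hψ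
      have hmem : ∀ x ∈ A', 0 ≤ x - 1 ∧ x - 1 < ∏ i, (n i : ℤ) := by
        intro x hx
        obtain ⟨h1, h2⟩ := Set.mem_Icc.1 (hA'sub hx)
        rw [hcast] at h2
        constructor <;> omega
      have hrec : ∀ x ∈ A', ∑ i, ψ x i * Pprod n i = x - 1 + ∑ i, Pprod n i := by
        intro x hx
        obtain ⟨h0, h1⟩ := hmem x hx
        rw [← hLφ (x - 1) h0 h1]
        rw [← Finset.sum_add_distrib]
        exact Finset.sum_congr rfl fun i _ => by simp [hψ]; ring
      refine ⟨A'.image ψ, ?_, ?_, ?_⟩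
      · -- cards agree
        rw [Finset.card_image_of_injOn]
        intro x hx y hy hxy
        have hx' := hmem x (by exact_mod_cast hx)
        have hy' := hmem y (by exact_mod_cast hy)
        have : ∑ i, ψ x i * Pprod n i = ∑ i, ψ y i * Pprod n i := by rw [hxy]
        rw [hrec x (by exact_mod_cast hx), hrec y (by exact_mod_cast hy)] at this
        omega
      · -- box membership
        intro x hx i
        obtain ⟨y, hy, rfl⟩ := Finset.mem_image.1 hx
        have := hbnd (y - 1) i
        simp only [hψ]
        exact Set.mem_Icc.2 ⟨by omega, by omega⟩
      · -- B_h property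
        rw [Finset.coe_image]
        refine isBh_image hA'Bh ψ ?_
        intro a b ha hb hab
        have hsum := sum_eval (fun k => ψ (a k)) (fun k => ψ (b k)) hab (Pprod n)
        have hva := Finset.sum_congr rfl fun k (_ : k ∈ Finset.univ) => hrec (a k) (ha k)
        have hvb := Finset.sum_congr rfl fun k (_ : k ∈ Finset.univ) => hrec (b k) (hb k)
        rw [hva, hvb, Finset.sum_add_distrib, Finset.sum_add_distrib] at hsum
        have : ∑ k, (a k - 1) = ∑ k, (b k - 1) := by
          have := add_right_cancel hsum
          exact this
        rw [Finset.sum_sub_distrib, Finset.sum_sub_distrib] at this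
        omega
end

section
/- Let A be a finite B_{2t} set in ℤ^d and B = [0,i_1−1]×⋯×[0,i_d−1] a box in ℤ^d. Then Σ_{z ∈ ℤ^d} d_{tA}(z) d_B(z) ≤ |B|² + C·|B|·|A|^{2t−1} for some constant C depending only on t and d, where tA is the t-fold sumset of A and d_X(z) = |{(x,x') ∈ X² : x − x' = z}|. -/
open Pointwise

namespace EnergyAux

lemma multiset_map_eq_sum {α β : Type*} (s : Finset α) (f : α → β) :
    Multiset.map f s.val = ∑ i ∈ s, ({f i} : Multiset β) := by
  rw [Finset.sum_eq_multiset_sum]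
  have h : (Multiset.map (fun i => ({f i} : Multiset β)) s.val)
      = Multiset.map (fun a => ({a} : Multiset β)) (Multiset.map f s.val) := by
    rw [Multiset.map_map]; rfl
  rw [h, Multiset.sum_map_singleton]

lemma sum_append_cast {M : Type*} [AddCommMonoid M] {t : ℕ} (h2 : 2 * t = t + t)
    (u v : Fin t → M) :
    ∑ i : Fin (2 * t), Fin.append u v (Fin.cast h2 i) = (∑ i, u i) + ∑ i, v i := by
  rw [Fin.sum_congr' (Fin.append u v) h2, Fin.sum_univ_add]
  simp only [Fin.append_left, Fin.append_right]

lemma map_append_cast {α : Type*} {t : ℕ} (h2 : 2 * t = t + t) (u v : Fin t → α) :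
    Multiset.map (fun i : Fin (2 * t) => Fin.append u v (Fin.cast h2 i)) Finset.univ.val
      = Multiset.map u Finset.univ.val + Multiset.map v Finset.univ.val := by
  rw [multiset_map_eq_sum, multiset_map_eq_sum, multiset_map_eq_sum]
  have h : ∀ j : Fin (t + t), ({Fin.append u v j} : Multiset α)
      = Fin.append (fun i => ({u i} : Multiset α)) (fun i => ({v i} : Multiset α)) j := by
    intro j
    refine Fin.addCases (fun i => ?_) (fun i => ?_) j <;>
      simp only [Fin.append_left, Fin.append_right]
  calc ∑ i : Fin (2 * t), ({Fin.append u v (Fin.cast h2 i)} : Multiset α)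
      = ∑ i : Fin (2 * t),
          Fin.append (fun i => ({u i} : Multiset α)) (fun i => ({v i} : Multiset α))
            (Fin.cast h2 i) := by simp_rw [h]
    _ = _ := sum_append_cast h2 _ _

lemma bh_pair {G : Type*} [AddCommMonoid G] {t : ℕ} {S : Set G} (hS : IsBh (2 * t) S)
    {f g f' g' : Fin t → G} (hf : ∀ i, f i ∈ S) (hg' : ∀ i, g' i ∈ S)
    (hf' : ∀ i, f' i ∈ S) (hg : ∀ i, g i ∈ S)
    (h : (∑ i, f i) + ∑ i, g' i = (∑ i, f' i) + ∑ i, g i) :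
    Multiset.map f Finset.univ.val + Multiset.map g' Finset.univ.val
      = Multiset.map f' Finset.univ.val + Multiset.map g Finset.univ.val := by
  have h2 : 2 * t = t + t := two_mul t
  have mem_append : ∀ (u v : Fin t → G), (∀ i, u i ∈ S) → (∀ i, v i ∈ S) →
      ∀ j : Fin (t + t), Fin.append u v j ∈ S := by
    intro u v hu hv j
    refine Fin.addCases (fun i => ?_) (fun i => ?_) j
    · rw [Fin.append_left]; exact hu i
    · rw [Fin.append_right]; exact hv i
  have key := hS (fun i => Fin.append f g' (Fin.cast h2 i))
      (fun i => Fin.append f' g (Fin.cast h2 i))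
      (fun i => mem_append f g' hf hg' _) (fun i => mem_append f' g hf' hg _)
      (by rw [sum_append_cast h2, sum_append_cast h2]; exact h)
  rwa [map_append_cast h2, map_append_cast h2] at key

lemma multiset_le_of_le_add {α : Type*} [DecidableEq α] {a b c : Multiset α}
    (h : a ≤ b + c) (hd : ∀ x, x ∈ a → x ∉ c) : a ≤ b := by
  rw [Multiset.le_iff_count] at h ⊢
  intro x
  by_cases hx : x ∈ a
  · have h1 := h x
    rw [Multiset.count_add] at h1
    have h2 : Multiset.count x c = 0 := Multiset.count_eq_zero.2 (hd x hx)
    omega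
  · simp [Multiset.count_eq_zero.2 hx]

end EnergyAux
namespace EnergyAux

open Finset

lemma sum_fiber_card_le {α β : Type*} [DecidableEq β] [DecidableEq α]
    (s : Finset α) (Z : Finset β) (f : α → β) :
    ∑ z ∈ Z, (s.filter fun x => f x = z).card ≤ s.card := by
  have hdisj : ∀ z1 ∈ Z, ∀ z2 ∈ Z, z1 ≠ z2 →
      Disjoint (s.filter fun x => f x = z1) (s.filter fun x => f x = z2) := by
    intro z1 _ z2 _ hne
    rw [Finset.disjoint_left]
    intro x hx1 hx2
    rw [mem_filter] at hx1 hx2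
    exact hne (hx1.2 ▸ hx2.2 ▸ rfl)
  rw [← Finset.card_biUnion hdisj]
  apply Finset.card_le_card
  intro x hx
  rw [Finset.mem_biUnion] at hx
  obtain ⟨z, _, hz⟩ := hx
  exact (mem_filter.1 hz).1

lemma dB_le {G : Type*} [AddCommGroup G] [DecidableEq G] (B : Finset G) (z : G) :
    ((B ×ˢ B).filter fun p => p.1 - p.2 = z).card ≤ B.card := by
  apply Finset.card_le_card_of_injOn (fun p => p.1)
  · intro p hp
    rw [Finset.mem_coe, mem_filter, mem_product] at hp
    exact hp.1.1
  · intro p hp q hq h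
    simp only [Finset.coe_filter, Set.mem_setOf_eq] at hp hq
    have h2 : p.2 = q.2 := by
      have := hp.2.trans hq.2.symm
      have hpq : (p.1 : G) = q.1 := h
      rw [hpq] at this
      exact (sub_right_injective this).symm ▸ rfl
    exact Prod.ext h h2

lemma dX_zero {G : Type*} [AddCommGroup G] [DecidableEq G] (X : Finset G) :
    ((X ×ˢ X).filter fun p => p.1 - p.2 = 0).card = X.card := by
  rw [← Finset.diag_card (s := X)]
  congr 1
  ext p
  rw [Finset.mem_diag, mem_filter, mem_product, sub_eq_zero]
  constructor
  · rintro ⟨⟨h1, _⟩, h3⟩; exact ⟨h1, h3⟩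
  · rintro ⟨h1, h2⟩; exact ⟨⟨h1, h2 ▸ h1⟩, h2⟩

end EnergyAux
namespace EnergyAux

open Finset

lemma single_shared_card {G : Type*} [DecidableEq G] (A : Finset G) {t : ℕ}
    (i j : Fin t) :
    (((Fintype.piFinset fun _ : Fin t => A) ×ˢ (Fintype.piFinset fun _ : Fin t => A)).filter
        fun q => q.1 i = q.2 j).card ≤ A.card ^ (2 * t - 1) := by
  classical
  have hcard : Fintype.card {k : Fin t // k ≠ j} = t - 1 := by
    have : Fintype.card {k : Fin t // k ≠ j}
        = Fintype.card (Fin t) - Fintype.card {k : Fin t // k = j} :=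
      Fintype.card_subtype_compl _
    rw [this, Fintype.card_subtype_eq, Fintype.card_fin]
  have hle : (((Fintype.piFinset fun _ : Fin t => A) ×ˢ (Fintype.piFinset fun _ : Fin t => A)).filter
        fun q => q.1 i = q.2 j).card ≤
      ((Fintype.piFinset fun _ : Fin t => A) ×ˢ
        (Fintype.piFinset fun _ : {k : Fin t // k ≠ j} => A)).card := by
    apply Finset.card_le_card_of_injOn (fun q => (q.1, fun k => q.2 k.1))
    · intro q hq
      rw [Finset.mem_coe, mem_filter, mem_product] at hq
      rw [Finset.mem_coe, mem_product]
      refine ⟨hq.1.1, ?_⟩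
      rw [Fintype.mem_piFinset]
      intro k
      exact (Fintype.mem_piFinset.1 hq.1.2) k.1
    · intro p hp q hq h
      simp only [Finset.coe_filter, Set.mem_setOf_eq] at hp hq
      have h' : (p.1, fun k : {k : Fin t // k ≠ j} => p.2 k.1)
          = (q.1, fun k : {k : Fin t // k ≠ j} => q.2 k.1) := h
      have h1 : p.1 = q.1 := (Prod.ext_iff.1 h').1
      have hsnd : (fun k : {k : Fin t // k ≠ j} => p.2 k.1)
          = (fun k : {k : Fin t // k ≠ j} => q.2 k.1) := (Prod.ext_iff.1 h').2
      have h2 : p.2 = q.2 := by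
        funext k
        by_cases hk : k = j
        · subst hk
          rw [← hp.2, ← hq.2, h1]
        · exact congrFun hsnd ⟨k, hk⟩
      exact Prod.ext h1 h2
  refine hle.trans ?_
  rw [Finset.card_product, Fintype.card_piFinset_const]
  have : ((Fintype.piFinset fun _ : {k : Fin t // k ≠ j} => A)).card = A.card ^ (t - 1) := by
    rw [Fintype.card_piFinset]
    rw [Finset.prod_const, Finset.card_univ, hcard]
  rw [this, ← pow_add]
  have : t + (t - 1) = 2 * t - 1 := by omega
  rw [this]

lemma shared_card_le {G : Type*} [DecidableEq G] (A : Finset G) {t : ℕ} :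
    (((Fintype.piFinset fun _ : Fin t => A) ×ˢ (Fintype.piFinset fun _ : Fin t => A)).filter
        fun q => ∃ i j, q.1 i = q.2 j).card ≤ t ^ 2 * A.card ^ (2 * t - 1) := by
  classical
  have hsub : (((Fintype.piFinset fun _ : Fin t => A) ×ˢ (Fintype.piFinset fun _ : Fin t => A)).filter
        fun q => ∃ i j, q.1 i = q.2 j) ⊆
      (Finset.univ : Finset (Fin t × Fin t)).biUnion fun ij =>
        ((Fintype.piFinset fun _ : Fin t => A) ×ˢ (Fintype.piFinset fun _ : Fin t => A)).filter
          fun q => q.1 ij.1 = q.2 ij.2 := by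
    intro q hq
    rw [mem_filter] at hq
    obtain ⟨hq1, i, j, hij⟩ := hq
    rw [Finset.mem_biUnion]
    exact ⟨(i, j), Finset.mem_univ _, mem_filter.2 ⟨hq1, hij⟩⟩
  calc _ ≤ _ := Finset.card_le_card hsub
    _ ≤ ∑ ij : Fin t × Fin t,
        (((Fintype.piFinset fun _ : Fin t => A) ×ˢ (Fintype.piFinset fun _ : Fin t => A)).filter
          fun q => q.1 ij.1 = q.2 ij.2).card := Finset.card_biUnion_le
    _ ≤ ∑ _ij : Fin t × Fin t, A.card ^ (2 * t - 1) :=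
        Finset.sum_le_sum fun ij _ => single_shared_card A ij.1 ij.2
    _ = t ^ 2 * A.card ^ (2 * t - 1) := by
        rw [Finset.sum_const, Finset.card_univ, Fintype.card_prod, Fintype.card_fin, smul_eq_mul,
          sq]

end EnergyAux
namespace EnergyAux

open Finset

lemma dichotomy {G : Type*} [AddCommGroup G] [DecidableEq G] {t : ℕ}
    (A : Finset G) (hA : IsBh (2 * t) (A : Set G)) (z : G)
    (T : Finset G)
    (hT : T = Finset.image (fun f => ∑ r, f r) (Fintype.piFinset fun _ : Fin t => A)) :
    ((T ×ˢ T).filter fun p => p.1 - p.2 = z).card ≤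
      1 + (((Fintype.piFinset fun _ : Fin t => A) ×ˢ
            (Fintype.piFinset fun _ : Fin t => A)).filter
            fun q => ((∑ r, q.1 r) - (∑ r, q.2 r) = z) ∧ ∃ i j, q.1 i = q.2 j).card := by
  classical
  set piA := Fintype.piFinset fun _ : Fin t => A with hpiA
  set P := (T ×ˢ T).filter fun p => p.1 - p.2 = z with hP
  rcases le_or_gt P.card 1 with hc | hc
  · exact hc.trans (Nat.le_add_right 1 _)
  have hrep : ∀ s ∈ T, ∃ f, f ∈ piA ∧ ∑ r, f r = s := by
    intro s hs
    rw [hT, Finset.mem_image] at hs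
    obtain ⟨f, hf, hfs⟩ := hs
    exact ⟨f, hf, hfs⟩
  choose! F hF1 hF2 using hrep
  have hmemT : ∀ p ∈ P, p.1 ∈ T ∧ p.2 ∈ T := by
    intro p hp
    rw [hP, mem_filter, mem_product] at hp
    exact hp.1
  have hdiff : ∀ p ∈ P, p.1 - p.2 = z := fun p hp => (mem_filter.1 hp).2
  have hmem : ∀ s ∈ T, ∀ i, F s i ∈ (A : Set G) := fun s hs i =>
    Fintype.mem_piFinset.1 (hF1 s hs) i
  have key : ∀ p ∈ P, ∃ i j, F p.1 i = F p.2 j := by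
    intro p hp
    by_contra hno
    push_neg at hno
    obtain ⟨a, ha, b, hb, hab⟩ := Finset.one_lt_card.1 hc
    have hT1 := hmemT p hp
    have huniq : ∀ q ∈ P, q = p := by
      intro q hq
      have hT2 := hmemT q hq
      have hsum : (∑ r, F p.1 r) + ∑ r, F q.2 r = (∑ r, F q.1 r) + ∑ r, F p.2 r := by
        rw [hF2 _ hT1.1, hF2 _ hT2.2, hF2 _ hT2.1, hF2 _ hT1.2]
        have e1 : p.1 - p.2 = q.1 - q.2 := (hdiff p hp).trans (hdiff q hq).symm
        exact sub_eq_sub_iff_add_eq_add.1 e1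
      have hmult := bh_pair hA (hmem _ hT1.1) (hmem _ hT2.2) (hmem _ hT2.1) (hmem _ hT1.2) hsum
      have hle : Multiset.map (F p.1) Finset.univ.val ≤
          Multiset.map (F q.1) Finset.univ.val + Multiset.map (F p.2) Finset.univ.val := by
        rw [← hmult]
        exact Multiset.le_add_right _ _
      have hdisj : ∀ x, x ∈ Multiset.map (F p.1) Finset.univ.val →
          x ∉ Multiset.map (F p.2) Finset.univ.val := by
        intro x hx1 hx2
        obtain ⟨i, -, hi⟩ := Multiset.mem_map.1 hx1
        obtain ⟨j, -, hj⟩ := Multiset.mem_map.1 hx2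
        exact hno i j (hi.trans hj.symm)
      have heq1 : Multiset.map (F p.1) Finset.univ.val = Multiset.map (F q.1) Finset.univ.val :=
        Multiset.eq_of_le_of_card_le (multiset_le_of_le_add hle hdisj) (by simp)
      have heq2 : Multiset.map (F q.2) Finset.univ.val = Multiset.map (F p.2) Finset.univ.val := by
        rw [heq1] at hmult
        exact add_left_cancel hmult
      have hq1 : q.1 = p.1 := by
        rw [← hF2 _ hT2.1, ← hF2 _ hT1.1]
        simp only [Finset.sum_eq_multiset_sum]
        rw [heq1]
      have hq2 : q.2 = p.2 := by
        rw [← hF2 _ hT2.2, ← hF2 _ hT1.2]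
        simp only [Finset.sum_eq_multiset_sum]
        rw [heq2]
      exact Prod.ext hq1 hq2
    exact hab ((huniq a ha).trans (huniq b hb).symm)
  refine le_trans ?_ (Nat.le_add_left _ 1)
  apply Finset.card_le_card_of_injOn (fun p => (F p.1, F p.2))
  · intro p hp
    have hT1 := hmemT p hp
    rw [Finset.mem_coe, mem_filter, mem_product]
    refine ⟨⟨hF1 _ hT1.1, hF1 _ hT1.2⟩, ?_, key p hp⟩
    rw [hF2 _ hT1.1, hF2 _ hT1.2]
    exact hdiff p hp
  · intro p hp q hq h
    have hp' : p ∈ P := hp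
    have hq' : q ∈ P := hq
    have hT1 := hmemT p hp'
    have hT2 := hmemT q hq'
    have h1 : F p.1 = F q.1 := congrArg Prod.fst h
    have h2 : F p.2 = F q.2 := congrArg Prod.snd h
    have e1 : p.1 = q.1 := by rw [← hF2 _ hT1.1, ← hF2 _ hT2.1, h1]
    have e2 : p.2 = q.2 := by rw [← hF2 _ hT1.2, ← hF2 _ hT2.2, h2]
    exact Prod.ext e1 e2

end EnergyAux
namespace EnergyAux

open Finset

lemma main_nat {G : Type*} [AddCommGroup G] [DecidableEq G] {t : ℕ}
    (A B T : Finset G) (hA : IsBh (2 * t) (A : Set G))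
    (hT : T = Finset.image (fun f => ∑ r, f r) (Fintype.piFinset fun _ : Fin t => A)) :
    ∑ z ∈ T - T, ((T ×ˢ T).filter fun p => p.1 - p.2 = z).card *
        ((B ×ˢ B).filter fun p => p.1 - p.2 = z).card ≤
      B.card ^ 2 + t ^ 2 * A.card ^ (2 * t - 1) * B.card := by
  classical
  set piA := Fintype.piFinset fun _ : Fin t => A with hpiA
  calc ∑ z ∈ T - T, ((T ×ˢ T).filter fun p => p.1 - p.2 = z).card *
        ((B ×ˢ B).filter fun p => p.1 - p.2 = z).card
      ≤ ∑ z ∈ T - T, (1 + ((piA ×ˢ piA).filter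
            fun q => ((∑ r, q.1 r) - (∑ r, q.2 r) = z) ∧ ∃ i j, q.1 i = q.2 j).card) *
          ((B ×ˢ B).filter fun p => p.1 - p.2 = z).card :=
        Finset.sum_le_sum fun z _ =>
          Nat.mul_le_mul_right _ (dichotomy A hA z T hT)
    _ = (∑ z ∈ T - T, ((B ×ˢ B).filter fun p => p.1 - p.2 = z).card) +
        ∑ z ∈ T - T, ((piA ×ˢ piA).filter
            fun q => ((∑ r, q.1 r) - (∑ r, q.2 r) = z) ∧ ∃ i j, q.1 i = q.2 j).card *
          ((B ×ˢ B).filter fun p => p.1 - p.2 = z).card := by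
        simp only [add_mul, one_mul]
        rw [Finset.sum_add_distrib]
    _ ≤ B.card ^ 2 + (∑ z ∈ T - T, ((piA ×ˢ piA).filter
            fun q => ((∑ r, q.1 r) - (∑ r, q.2 r) = z) ∧ ∃ i j, q.1 i = q.2 j).card) *
          B.card := by
        apply Nat.add_le_add
        · calc ∑ z ∈ T - T, ((B ×ˢ B).filter fun p => p.1 - p.2 = z).card
              ≤ (B ×ˢ B).card := sum_fiber_card_le _ _ _
            _ = B.card ^ 2 := by rw [Finset.card_product, sq]
        · rw [Finset.sum_mul]
          exact Finset.sum_le_sum fun z _ => Nat.mul_le_mul_left _ (dB_le B z)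
    _ ≤ B.card ^ 2 + t ^ 2 * A.card ^ (2 * t - 1) * B.card := by
        apply Nat.add_le_add_left
        apply Nat.mul_le_mul_right
        calc ∑ z ∈ T - T, ((piA ×ˢ piA).filter
              fun q => ((∑ r, q.1 r) - (∑ r, q.2 r) = z) ∧ ∃ i j, q.1 i = q.2 j).card
            ≤ ∑ z ∈ T - T, (((piA ×ˢ piA).filter fun q => ∃ i j, q.1 i = q.2 j).filter
                fun q => (∑ r, q.1 r) - (∑ r, q.2 r) = z).card := by
              apply Finset.sum_le_sum
              intro z _
              apply Finset.card_le_card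
              intro q hq
              simp only [Finset.mem_filter] at hq ⊢
              tauto
          _ ≤ ((piA ×ˢ piA).filter fun q => ∃ i j, q.1 i = q.2 j).card :=
              sum_fiber_card_le _ _ _
          _ ≤ t ^ 2 * A.card ^ (2 * t - 1) := shared_card_le A

end EnergyAux
theorem energy_bound_even (d t : ℕ) :
    ∃ C : ℝ, ∀ (A : Finset (Fin d → ℤ)) (i : Fin d → ℕ),
      (∀ j, 0 < i j) →
      IsBh (2 * t) (A : Set (Fin d → ℤ)) →
      ∀ B T : Finset (Fin d → ℤ),
        B = Finset.Icc 0 (fun j => (i j : ℤ) - 1) →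
        T = Finset.image (fun f => ∑ r, f r)
              (Fintype.piFinset fun _ : Fin t => A) →
        (∑ z ∈ T - T,
            (((T ×ˢ T).filter fun p => p.1 - p.2 = z).card : ℝ) *
              (((B ×ˢ B).filter fun p => p.1 - p.2 = z).card : ℝ)) ≤
          (B.card : ℝ) ^ 2 + C * (B.card : ℝ) * (A.card : ℝ) ^ (2 * t - 1) := by
  classical
  refine ⟨((t ^ 2 : ℕ) : ℝ), ?_⟩
  intro A i hi hA B T hB hT
  have main := EnergyAux.main_nat A B T hA hT
  have cast1 : (∑ z ∈ T - T,
      (((T ×ˢ T).filter fun p => p.1 - p.2 = z).card : ℝ) *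
        (((B ×ˢ B).filter fun p => p.1 - p.2 = z).card : ℝ)) =
      ((∑ z ∈ T - T, ((T ×ˢ T).filter fun p => p.1 - p.2 = z).card *
        ((B ×ˢ B).filter fun p => p.1 - p.2 = z).card : ℕ) : ℝ) := by
    push_cast
    rfl
  rw [cast1]
  calc ((∑ z ∈ T - T, ((T ×ˢ T).filter fun p => p.1 - p.2 = z).card *
        ((B ×ˢ B).filter fun p => p.1 - p.2 = z).card : ℕ) : ℝ)
      ≤ ((B.card ^ 2 + t ^ 2 * A.card ^ (2 * t - 1) * B.card : ℕ) : ℝ) := Nat.cast_le.2 main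
    _ = (B.card : ℝ) ^ 2 + ((t ^ 2 : ℕ) : ℝ) * (B.card : ℝ) * (A.card : ℝ) ^ (2 * t - 1) := by
        push_cast
        ring
end

section
/- Let A be a finite B_{2t−1} set in ℤ^d, let t∗A denote the set of sums of t distinct elements of A, and B = [0,i_1−1]×⋯×[0,i_d−1]. Then Σ_{z ∈ ℤ^d} d_{t∗A}(z) d_B(z) ≤ (|A|/t)·|B|² + C·|B|·|A|^{2t−1} for some constant C depending only on t and d. -/
open Pointwise

section Helpers
variable {G : Type*} [AddCommGroup G] [DecidableEq G]

set_option linter.unusedSectionVars false in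
lemma exists_fun_of_card {m : Multiset G} {h : ℕ} (hc : Multiset.card m = h) :
    ∃ f : Fin h → G, Multiset.map f Finset.univ.val = m := by
  set l := m.toList with hl
  have hlen : l.length = h := by rw [hl, Multiset.length_toList, hc]
  refine ⟨fun i => l.get (Fin.cast hlen.symm i), ?_⟩
  have : Multiset.map (fun i => l.get (Fin.cast hlen.symm i)) Finset.univ.val
      = ↑(List.ofFn fun i => l.get (Fin.cast hlen.symm i)) := by
    rw [Fin.univ_val_map]
  rw [this]
  have : (List.ofFn fun i : Fin h => l.get (Fin.cast hlen.symm i)) = l := by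
    apply List.ext_getElem
    · simp [hlen]
    · intro n h1 h2
      simp [List.getElem_ofFn]
  rw [this, hl, Multiset.coe_toList]

lemma bh_multiset {h : ℕ} {S : Set G} (hS : IsBh h S) (m₁ m₂ : Multiset G)
    (hm₁ : ∀ x ∈ m₁, x ∈ S) (hm₂ : ∀ x ∈ m₂, x ∈ S)
    (hc₁ : Multiset.card m₁ = h) (hc₂ : Multiset.card m₂ = h)
    (hsum : m₁.sum = m₂.sum) : m₁ = m₂ := by
  obtain ⟨a, ha⟩ := exists_fun_of_card hc₁
  obtain ⟨b, hb⟩ := exists_fun_of_card hc₂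
  have key := hS a b
    (fun i => hm₁ _ (by rw [← ha]; exact Multiset.mem_map_of_mem _ (Finset.mem_univ_val i)))
    (fun i => hm₂ _ (by rw [← hb]; exact Multiset.mem_map_of_mem _ (Finset.mem_univ_val i)))
    (by rw [Finset.sum_eq_multiset_sum, Finset.sum_eq_multiset_sum, ha, hb, hsum])
  rwa [ha, hb] at key

end Helpers

section Helpers2
variable {G : Type*} [AddCommGroup G] [DecidableEq G]

lemma val_sum_eq (s : Finset G) : s.val.sum = ∑ x ∈ s, x := by
  rw [Finset.sum_eq_multiset_sum, Multiset.map_id']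

lemma sum_inj {t : ℕ} (ht : 1 ≤ t) {S : Finset G} (hS : IsBh (2*t-1) (S : Set G))
    {s₁ s₂ : Finset G} (h₁ : s₁ ∈ S.powersetCard t) (h₂ : s₂ ∈ S.powersetCard t)
    (hsum : ∑ x ∈ s₁, x = ∑ x ∈ s₂, x) : s₁ = s₂ := by
  rw [Finset.mem_powersetCard] at h₁ h₂
  obtain ⟨hs₁S, hc₁⟩ := h₁
  obtain ⟨hs₂S, hc₂⟩ := h₂
  have hne : s₁.Nonempty := by rw [← Finset.card_pos, hc₁]; omega
  obtain ⟨a₀, ha₀⟩ := hne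
  have key := bh_multiset hS (s₁.val + Multiset.replicate (t-1) a₀)
      (s₂.val + Multiset.replicate (t-1) a₀) ?_ ?_ ?_ ?_ ?_
  · exact Finset.val_inj.mp (add_right_cancel key)
  · intro x hx
    rcases Multiset.mem_add.mp hx with hx | hx
    · exact hs₁S hx
    · rw [Multiset.eq_of_mem_replicate hx]; exact hs₁S ha₀
  · intro x hx
    rcases Multiset.mem_add.mp hx with hx | hx
    · exact hs₂S hx
    · rw [Multiset.eq_of_mem_replicate hx]; exact hs₁S ha₀
  · rw [Multiset.card_add, Multiset.card_replicate, ← Finset.card_def, hc₁]; omega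
  · rw [Multiset.card_add, Multiset.card_replicate, ← Finset.card_def, hc₂]; omega
  · rw [Multiset.sum_add, Multiset.sum_add, val_sum_eq, val_sum_eq, hsum]

end Helpers2

set_option linter.unusedSectionVars false

section Helpers3
variable {G : Type*} [AddCommGroup G] [DecidableEq G]

lemma pair_eq_of_not_disjoint {t : ℕ} (ht : 1 ≤ t) {S : Finset G}
    (hS : IsBh (2*t-1) (S : Set G)) {z : G} {p q : Finset G × Finset G}
    (hp : p ∈ (S.powersetCard t ×ˢ S.powersetCard t).filter
        (fun p => Disjoint p.1 p.2 ∧ (∑ x ∈ p.1, x) - (∑ x ∈ p.2, x) = z))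
    (hq : q ∈ (S.powersetCard t ×ˢ S.powersetCard t).filter
        (fun p => Disjoint p.1 p.2 ∧ (∑ x ∈ p.1, x) - (∑ x ∈ p.2, x) = z))
    (hnd : ¬ Disjoint p.1 q.1) : p = q := by
  rw [Finset.mem_filter, Finset.mem_product] at hp hq
  obtain ⟨⟨hp1, hp2⟩, hpd, hpz⟩ := hp
  obtain ⟨⟨hq1, hq2⟩, hqd, hqz⟩ := hq
  rw [Finset.mem_powersetCard] at hp1 hp2 hq1 hq2
  obtain ⟨a, hap, haq⟩ := Finset.not_disjoint_iff.mp hnd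
  set m₁ := p.1.val + q.2.val with hm₁
  set m₂ := q.1.val + p.2.val with hm₂
  have ha₁ : a ∈ m₁ := Multiset.mem_add.mpr (Or.inl (Finset.mem_val.mpr hap))
  have ha₂ : a ∈ m₂ := Multiset.mem_add.mpr (Or.inl (Finset.mem_val.mpr haq))
  have hsum : m₁.sum = m₂.sum := by
    rw [hm₁, hm₂, Multiset.sum_add, Multiset.sum_add, val_sum_eq, val_sum_eq,
      val_sum_eq, val_sum_eq]
    have := hpz.trans hqz.symm
    rw [sub_eq_sub_iff_add_eq_add] at this
    exact this
  have key : m₁.erase a = m₂.erase a := by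
    apply bh_multiset hS
    · intro x hx
      rcases Multiset.mem_add.mp (Multiset.mem_of_mem_erase hx) with h | h
      · exact hp1.1 (Finset.mem_val.mp h)
      · exact hq2.1 (Finset.mem_val.mp h)
    · intro x hx
      rcases Multiset.mem_add.mp (Multiset.mem_of_mem_erase hx) with h | h
      · exact hq1.1 (Finset.mem_val.mp h)
      · exact hp2.1 (Finset.mem_val.mp h)
    · rw [Multiset.card_erase_of_mem ha₁, hm₁, Multiset.card_add,
        ← Finset.card_def, ← Finset.card_def, hp1.2, hq2.2, Nat.pred_eq_sub_one]
      omega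
    · rw [Multiset.card_erase_of_mem ha₂, hm₂, Multiset.card_add,
        ← Finset.card_def, ← Finset.card_def, hq1.2, hp2.2, Nat.pred_eq_sub_one]
      omega
    · have e₁ : a + (m₁.erase a).sum = m₁.sum := by
        conv_rhs => rw [← Multiset.cons_erase ha₁]
        rw [Multiset.sum_cons]
      have e₂ : a + (m₂.erase a).sum = m₂.sum := by
        conv_rhs => rw [← Multiset.cons_erase ha₂]
        rw [Multiset.sum_cons]
      have := e₁.trans (hsum.trans e₂.symm)
      exact add_left_cancel this
  have hmeq : m₁ = m₂ := by
    rw [← Multiset.cons_erase ha₁, ← Multiset.cons_erase ha₂, key]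
  have h11 : p.1 = q.1 := by
    apply Finset.eq_of_subset_of_card_le _ (by rw [hp1.2, hq1.2])
    intro x hx
    have : x ∈ m₂ := by
      rw [← hmeq]; exact Multiset.mem_add.mpr (Or.inl (Finset.mem_val.mpr hx))
    rcases Multiset.mem_add.mp this with h | h
    · exact Finset.mem_val.mp h
    · exact absurd (Finset.mem_val.mp h) (Finset.disjoint_left.mp hpd hx)
  have h22 : p.2 = q.2 := by
    rw [hm₁, hm₂, h11] at hmeq
    have := add_left_cancel hmeq
    exact (Finset.val_inj.mp this).symm
  exact Prod.ext h11 h22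

lemma fiber_bound {t : ℕ} (ht : 1 ≤ t) {S : Finset G} (hS : IsBh (2*t-1) (S : Set G))
    {z : G} :
    t * ((S.powersetCard t ×ˢ S.powersetCard t).filter
        (fun p => Disjoint p.1 p.2 ∧ (∑ x ∈ p.1, x) - (∑ x ∈ p.2, x) = z)).card
      ≤ S.card := by
  set F := (S.powersetCard t ×ˢ S.powersetCard t).filter
      (fun p => Disjoint p.1 p.2 ∧ (∑ x ∈ p.1, x) - (∑ x ∈ p.2, x) = z) with hF
  have hcardt : ∀ p ∈ F, p.1.card = t := by
    intro p hp
    rw [hF, Finset.mem_filter, Finset.mem_product] at hp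
    exact (Finset.mem_powersetCard.mp hp.1.1).2
  have hinj : Set.InjOn Prod.fst (F : Set (Finset G × Finset G)) := by
    intro p hp q hq hpq
    rw [Finset.mem_coe] at hp hq
    apply pair_eq_of_not_disjoint ht hS hp hq
    rw [hpq]
    intro hd
    have hq1 : q.1 = ∅ := disjoint_self.mp hd
    have hct := hcardt q hq
    rw [hq1, Finset.card_empty] at hct
    omega
  set I := F.image Prod.fst with hI
  have hIcard : I.card = F.card := Finset.card_image_of_injOn hinj
  have hpair : ∀ s ∈ I, ∀ s' ∈ I, s ≠ s' → Disjoint s s' := by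
    intro s hs s' hs' hne
    obtain ⟨p, hp, rfl⟩ := Finset.mem_image.mp hs
    obtain ⟨q, hq, rfl⟩ := Finset.mem_image.mp hs'
    by_contra hd
    exact hne (congrArg Prod.fst (pair_eq_of_not_disjoint ht hS hp hq hd))
  have hsub : I.biUnion id ⊆ S := by
    intro x hx
    obtain ⟨s, hs, hxs⟩ := Finset.mem_biUnion.mp hx
    obtain ⟨p, hp, rfl⟩ := Finset.mem_image.mp hs
    rw [hF, Finset.mem_filter, Finset.mem_product] at hp
    exact (Finset.mem_powersetCard.mp hp.1.1).1 hxs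
  have hsum : ∑ s ∈ I, (id s).card = t * I.card := by
    rw [Finset.sum_congr rfl (fun s hs => ?_), Finset.sum_const, smul_eq_mul, mul_comm]
    obtain ⟨p, hp, rfl⟩ := Finset.mem_image.mp hs
    exact hcardt p hp
  calc t * F.card = t * I.card := by rw [hIcard]
    _ = ∑ s ∈ I, (id s).card := hsum.symm
    _ = (I.biUnion id).card := (Finset.card_biUnion hpair).symm
    _ ≤ S.card := Finset.card_le_card hsub

end Helpers3

section Helpers4
variable {G : Type*} [AddCommGroup G] [DecidableEq G]

lemma nondisjoint_count {t : ℕ} (ht : 1 ≤ t) (S : Finset G) :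
    ((S.powersetCard t ×ˢ S.powersetCard t).filter (fun p => ¬ Disjoint p.1 p.2)).card
      ≤ S.card ^ (2*t-1) := by
  set P := S.powersetCard t with hP
  have hsub : (P ×ˢ P).filter (fun p => ¬ Disjoint p.1 p.2)
      ⊆ S.biUnion (fun a => (P.filter (a ∈ ·)) ×ˢ (P.filter (a ∈ ·))) := by
    intro p hp
    rw [Finset.mem_filter, Finset.mem_product] at hp
    obtain ⟨⟨hp1, hp2⟩, hnd⟩ := hp
    obtain ⟨a, ha1, ha2⟩ := Finset.not_disjoint_iff.mp hnd
    refine Finset.mem_biUnion.mpr ⟨a, (Finset.mem_powersetCard.mp hp1).1 ha1, ?_⟩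
    rw [Finset.mem_product, Finset.mem_filter, Finset.mem_filter]
    exact ⟨⟨hp1, ha1⟩, hp2, ha2⟩
  have hPa : ∀ a, (P.filter (a ∈ ·)).card ≤ S.card ^ (t-1) := by
    intro a
    have : (P.filter (a ∈ ·)).card ≤ (S.powersetCard (t-1)).card := by
      apply Finset.card_le_card_of_injOn (fun s => s.erase a)
      · intro s hs
        rw [Finset.mem_coe, Finset.mem_filter] at hs
        obtain ⟨hsP, has⟩ := hs
        rw [hP, Finset.mem_powersetCard] at hsP
        rw [Finset.mem_coe, Finset.mem_powersetCard]
        exact ⟨(Finset.erase_subset a s).trans hsP.1,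
          by rw [Finset.card_erase_of_mem has, hsP.2]⟩
      · intro s hs s' hs' he
        rw [Finset.mem_coe, Finset.mem_filter] at hs hs'
        have he' : s.erase a = s'.erase a := he
        rw [← Finset.insert_erase hs.2, ← Finset.insert_erase hs'.2, he']
    rw [Finset.card_powersetCard] at this
    exact this.trans (Nat.choose_le_pow _ _)
  calc ((P ×ˢ P).filter (fun p => ¬ Disjoint p.1 p.2)).card
      ≤ (S.biUnion (fun a => (P.filter (a ∈ ·)) ×ˢ (P.filter (a ∈ ·)))).card :=
        Finset.card_le_card hsub
    _ ≤ ∑ a ∈ S, ((P.filter (a ∈ ·)) ×ˢ (P.filter (a ∈ ·))).card :=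
        Finset.card_biUnion_le
    _ ≤ ∑ _a ∈ S, S.card ^ (t-1) * S.card ^ (t-1) := by
        apply Finset.sum_le_sum
        intro a _
        rw [Finset.card_product]
        exact Nat.mul_le_mul (hPa a) (hPa a)
    _ = S.card * (S.card ^ (t-1) * S.card ^ (t-1)) := by
        rw [Finset.sum_const, smul_eq_mul]
    _ = S.card ^ (2*t-1) := by
        rw [← pow_add, ← pow_succ']
        congr 1
        omega

lemma sum_dB_le (B : Finset G) (Z : Finset G) :
    ∑ z ∈ Z, ((B ×ˢ B).filter (fun p => p.1 - p.2 = z)).card ≤ B.card ^ 2 := by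
  have hdisj : ∀ z ∈ Z, ∀ z' ∈ Z, z ≠ z' →
      Disjoint ((B ×ˢ B).filter (fun p => p.1 - p.2 = z))
        ((B ×ˢ B).filter (fun p => p.1 - p.2 = z')) := by
    intro z _ z' _ hne
    rw [Finset.disjoint_left]
    intro p hp hp'
    exact hne ((Finset.mem_filter.mp hp).2.symm.trans (Finset.mem_filter.mp hp').2)
  calc ∑ z ∈ Z, ((B ×ˢ B).filter (fun p => p.1 - p.2 = z)).card
      = (Z.biUnion fun z => (B ×ˢ B).filter (fun p => p.1 - p.2 = z)).card :=
        (Finset.card_biUnion hdisj).symm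
    _ ≤ (B ×ˢ B).card := Finset.card_le_card (by
        intro p hp
        obtain ⟨z, _, hz⟩ := Finset.mem_biUnion.mp hp
        exact Finset.mem_of_mem_filter p hz)
    _ = B.card ^ 2 := by rw [Finset.card_product, sq]

lemma dB_le (B : Finset G) (z : G) :
    ((B ×ˢ B).filter (fun p => p.1 - p.2 = z)).card ≤ B.card := by
  apply Finset.card_le_card_of_injOn Prod.fst
  · intro p hp
    rw [Finset.mem_coe, Finset.mem_filter, Finset.mem_product] at hp
    exact hp.1.1
  · intro p hp q hq he
    rw [Finset.mem_coe, Finset.mem_filter] at hp hq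
    have h2 := hq.2
    rw [← he] at h2
    exact Prod.ext he (sub_right_injective (hp.2.trans h2.symm))

end Helpers4

open Pointwise in
lemma energy_aux {G : Type*} [AddCommGroup G] [DecidableEq G] {t : ℕ} (ht : 1 ≤ t)
    (A B : Finset G) (hA : IsBh (2*t-1) (A : Set G)) :
    (∑ z ∈ ((A.powersetCard t).image fun s => ∑ x ∈ s, x)
          - ((A.powersetCard t).image fun s => ∑ x ∈ s, x),
        (((((A.powersetCard t).image fun s => ∑ x ∈ s, x) ×ˢ
            ((A.powersetCard t).image fun s => ∑ x ∈ s, x)).filter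
              fun p => p.1 - p.2 = z).card : ℝ) *
          (((B ×ˢ B).filter fun p => p.1 - p.2 = z).card : ℝ)) ≤
      ((A.card : ℝ) / t) * (B.card : ℝ) ^ 2 +
        (B.card : ℝ) * (A.card : ℝ) ^ (2 * t - 1) := by
  classical
  set σ : Finset G → G := fun s => ∑ x ∈ s, x with hσ
  set P := A.powersetCard t with hP
  set T := P.image σ with hT
  set dB : G → ℝ := fun z => (((B ×ˢ B).filter fun p => p.1 - p.2 = z).card : ℝ)
    with hdB
  have hdB_nonneg : ∀ z, 0 ≤ dB z := fun z => Nat.cast_nonneg _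
  have hdB_le : ∀ z, dB z ≤ (B.card : ℝ) := fun z => Nat.cast_le.mpr (dB_le B z)
  have hinjσ : ∀ x ∈ P, ∀ y ∈ P, σ x = σ y → x = y := fun x hx y hy h =>
    sum_inj ht hA hx hy h
  have step1 : (∑ z ∈ T - T,
      (((T ×ˢ T).filter fun p => p.1 - p.2 = z).card : ℝ) * dB z)
      = ∑ p ∈ P ×ˢ P, dB (σ p.1 - σ p.2) := by
    have h1 : ∀ z ∈ T - T, (((T ×ˢ T).filter fun p => p.1 - p.2 = z).card : ℝ) * dB z
        = ∑ _p ∈ (T ×ˢ T).filter (fun p => p.1 - p.2 = z), dB z := by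
      intro z _
      rw [Finset.sum_const, nsmul_eq_mul]
    rw [Finset.sum_congr rfl h1,
      Finset.sum_fiberwise_of_maps_to' (g := fun p : G × G => p.1 - p.2)
        (fun p hp => by
          rw [Finset.mem_product] at hp
          exact Finset.sub_mem_sub hp.1 hp.2) dB,
      Finset.sum_product]
    conv_rhs => rw [Finset.sum_product]
    rw [hT, Finset.sum_image hinjσ]
    refine Finset.sum_congr rfl fun s₁ _ => ?_
    rw [Finset.sum_image hinjσ]
  rw [step1, ← Finset.sum_filter_add_sum_filter_not (P ×ˢ P)
    (fun p => Disjoint p.1 p.2)]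
  have bound2 : (∑ p ∈ (P ×ˢ P).filter (fun p => ¬ Disjoint p.1 p.2),
      dB (σ p.1 - σ p.2)) ≤ (B.card : ℝ) * (A.card : ℝ) ^ (2*t-1) := by
    calc (∑ p ∈ (P ×ˢ P).filter (fun p => ¬ Disjoint p.1 p.2), dB (σ p.1 - σ p.2))
        ≤ ∑ _p ∈ (P ×ˢ P).filter (fun p => ¬ Disjoint p.1 p.2), (B.card : ℝ) :=
          Finset.sum_le_sum fun p _ => hdB_le _
      _ = (((P ×ˢ P).filter (fun p => ¬ Disjoint p.1 p.2)).card : ℝ) * (B.card : ℝ) := by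
          rw [Finset.sum_const, nsmul_eq_mul]
      _ ≤ (A.card : ℝ) ^ (2*t-1) * (B.card : ℝ) := by
          apply mul_le_mul_of_nonneg_right _ (Nat.cast_nonneg _)
          rw [show ((A.card : ℝ) ^ (2*t-1)) = ((A.card ^ (2*t-1) : ℕ) : ℝ) by
            push_cast; ring]
          exact Nat.cast_le.mpr (nondisjoint_count ht A)
      _ = (B.card : ℝ) * (A.card : ℝ) ^ (2*t-1) := by ring
  have bound1 : (∑ p ∈ (P ×ˢ P).filter (fun p => Disjoint p.1 p.2),
      dB (σ p.1 - σ p.2)) ≤ ((A.card : ℝ) / t) * (B.card : ℝ) ^ 2 := by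
    set Pd := (P ×ˢ P).filter (fun p => Disjoint p.1 p.2) with hPd
    set Z := Pd.image (fun p => σ p.1 - σ p.2) with hZ
    have hfib : (∑ p ∈ Pd, dB (σ p.1 - σ p.2))
        = ∑ z ∈ Z, ((Pd.filter (fun p => σ p.1 - σ p.2 = z)).card : ℝ) * dB z := by
      rw [← Finset.sum_fiberwise_of_maps_to' (g := fun p : Finset G × Finset G => σ p.1 - σ p.2)
        (fun p hp => Finset.mem_image_of_mem _ hp) dB]
      exact Finset.sum_congr rfl fun z _ => by rw [Finset.sum_const, nsmul_eq_mul]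
    rw [hfib]
    have hfc : ∀ z, ((Pd.filter (fun p => σ p.1 - σ p.2 = z)).card : ℝ)
        ≤ (A.card : ℝ) / t := by
      intro z
      rw [le_div_iff₀ (by exact_mod_cast ht)]
      have heq : Pd.filter (fun p => σ p.1 - σ p.2 = z)
          = (P ×ˢ P).filter (fun p => Disjoint p.1 p.2 ∧ σ p.1 - σ p.2 = z) := by
        rw [hPd, Finset.filter_filter]
      rw [heq]
      have hb := fiber_bound (z := z) ht hA
      calc (((P ×ˢ P).filter (fun p => Disjoint p.1 p.2 ∧ σ p.1 - σ p.2 = z)).card : ℝ)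
            * (t : ℝ)
          = ((t * ((P ×ˢ P).filter
              (fun p => Disjoint p.1 p.2 ∧ σ p.1 - σ p.2 = z)).card : ℕ) : ℝ) := by
            push_cast; ring
        _ ≤ (A.card : ℝ) := Nat.cast_le.mpr hb
    calc (∑ z ∈ Z, ((Pd.filter (fun p => σ p.1 - σ p.2 = z)).card : ℝ) * dB z)
        ≤ ∑ z ∈ Z, ((A.card : ℝ) / t) * dB z :=
          Finset.sum_le_sum fun z _ => mul_le_mul_of_nonneg_right (hfc z) (hdB_nonneg z)
      _ = ((A.card : ℝ) / t) * ∑ z ∈ Z, dB z := by rw [Finset.mul_sum]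
      _ ≤ ((A.card : ℝ) / t) * (B.card : ℝ) ^ 2 := by
          apply mul_le_mul_of_nonneg_left _ (by positivity)
          calc (∑ z ∈ Z, dB z)
              = ((∑ z ∈ Z, ((B ×ˢ B).filter (fun p => p.1 - p.2 = z)).card : ℕ) : ℝ) := by
                push_cast; rfl
            _ ≤ ((B.card ^ 2 : ℕ) : ℝ) := Nat.cast_le.mpr (sum_dB_le B Z)
            _ = (B.card : ℝ) ^ 2 := by push_cast; ring
  linarith


theorem energy_bound_odd (d t : ℕ) (ht : 1 ≤ t) :
    ∃ C : ℝ, ∀ (A : Finset (Fin d → ℤ)) (i : Fin d → ℕ),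
      (∀ j, 0 < i j) →
      IsBh (2 * t - 1) (A : Set (Fin d → ℤ)) →
      ∀ B T : Finset (Fin d → ℤ),
        B = Finset.Icc 0 (fun j => (i j : ℤ) - 1) →
        T = Finset.image (fun s => ∑ x ∈ s, x) (Finset.powersetCard t A) →
        (∑ z ∈ T - T,
            (((T ×ˢ T).filter fun p => p.1 - p.2 = z).card : ℝ) *
              (((B ×ˢ B).filter fun p => p.1 - p.2 = z).card : ℝ)) ≤
          ((A.card : ℝ) / t) * (B.card : ℝ) ^ 2 +
            C * (B.card : ℝ) * (A.card : ℝ) ^ (2 * t - 1) := by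
  refine ⟨1, fun A i _ hA B T hBdef hTdef => ?_⟩
  subst hTdef
  have := energy_aux ht A B hA
  linarith
end

section
/- If A is a finite B_{2t-1} set in an abelian group and t ≥ 1, then the set t∗A of sums of t pairwise distinct elements of A has cardinality exactly C(|A|, t). -/
lemma exists_fn_of_multiset {G : Type*} (m : Multiset G) (n : ℕ)
    (hn : Multiset.card m = n) :
    ∃ f : Fin n → G, Multiset.map f Finset.univ.val = m := by
  have hl : m.toList.length = n := by rw [Multiset.length_toList, hn]
  refine ⟨fun i => m.toList.get (Fin.cast hl.symm i), ?_⟩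
  rw [Fin.univ_val_map]
  have : List.ofFn (fun i : Fin n => m.toList.get (Fin.cast hl.symm i)) = m.toList := by
    subst hl
    exact List.ofFn_getElem (xs := m.toList)
  rw [this, Multiset.coe_toList]

theorem distinct_tfold_sumset_card {G : Type*} [AddCommGroup G] [DecidableEq G]
    (t : ℕ) (ht : 1 ≤ t) (A : Finset G)
    (hBh : IsBh (2 * t - 1) (A : Set G)) :
    (Finset.image (fun s => ∑ x ∈ s, x) (Finset.powersetCard t A)).card =
      A.card.choose t := by
  rw [Finset.card_image_of_injOn, Finset.card_powersetCard]
  intro s₁ hs₁ s₂ hs₂ hsum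
  simp only [Finset.mem_coe, Finset.mem_powersetCard] at hs₁ hs₂
  by_contra hne
  set d₁ := s₁ \ s₂ with hd₁
  set d₂ := s₂ \ s₁ with hd₂
  have hc1 : d₁.card + (s₁ ∩ s₂).card = t := by
    rw [hd₁, Finset.card_sdiff_add_card_inter, hs₁.2]
  have hc2 : d₂.card + (s₁ ∩ s₂).card = t := by
    rw [hd₂, Finset.inter_comm, Finset.card_sdiff_add_card_inter, hs₂.2]
  have hk : d₁.card = d₂.card := by omega
  have hdsum : ∑ x ∈ d₁, x = ∑ x ∈ d₂, x := by
    have h1 : ∑ x ∈ d₁, x + ∑ x ∈ s₁ ∩ s₂, x = ∑ x ∈ s₁, x := by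
      rw [hd₁, ← Finset.sdiff_inter_self_left s₁ s₂]
      exact Finset.sum_sdiff (Finset.inter_subset_left)
    have h2 : ∑ x ∈ d₂, x + ∑ x ∈ s₁ ∩ s₂, x = ∑ x ∈ s₂, x := by
      rw [hd₂, Finset.inter_comm, ← Finset.sdiff_inter_self_left s₂ s₁]
      exact Finset.sum_sdiff (Finset.inter_subset_left)
    have := h1.trans (hsum.trans h2.symm)
    exact add_right_cancel this
  have hd1ne : d₁.Nonempty := by
    rw [Finset.sdiff_nonempty]
    intro hsub
    exact hne (Finset.eq_of_subset_of_card_le hsub (by rw [hs₁.2, hs₂.2]))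
  obtain ⟨a₀, ha₀⟩ := hd1ne
  set k := d₁.card with hkdef
  have hk1 : 1 ≤ k := Finset.card_pos.mpr ⟨a₀, ha₀⟩
  have hkt : k ≤ t := by omega
  set n := 2 * t - 1 with hndef
  have hkn : k ≤ n := by omega
  set m₁ := d₁.val + Multiset.replicate (n - k) a₀ with hm₁
  set m₂ := d₂.val + Multiset.replicate (n - k) a₀ with hm₂
  obtain ⟨f, hf⟩ := exists_fn_of_multiset m₁ n (by
    simp [hm₁, Multiset.card_replicate]; omega)
  obtain ⟨g, hg⟩ := exists_fn_of_multiset m₂ n (by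
    simp [hm₂, Multiset.card_replicate, ← hk]; omega)
  have ha₀A : a₀ ∈ A := hs₁.1 (Finset.sdiff_subset ha₀)
  have hfA : ∀ i, f i ∈ (A : Set G) := by
    intro i
    have : f i ∈ m₁ := by
      rw [← hf]; exact Multiset.mem_map_of_mem f (Finset.mem_univ_val _)
    rw [hm₁, Multiset.mem_add] at this
    rcases this with h | h
    · exact hs₁.1 (Finset.sdiff_subset h)
    · rw [Multiset.eq_of_mem_replicate h]; exact ha₀A
  have hgA : ∀ i, g i ∈ (A : Set G) := by
    intro i
    have : g i ∈ m₂ := by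
      rw [← hg]; exact Multiset.mem_map_of_mem g (Finset.mem_univ_val _)
    rw [hm₂, Multiset.mem_add] at this
    rcases this with h | h
    · exact hs₂.1 (Finset.sdiff_subset h)
    · rw [Multiset.eq_of_mem_replicate h]; exact ha₀A
  have hsumfg : (∑ i, f i) = ∑ i, g i := by
    have h1 : (∑ i, f i) = m₁.sum := by rw [← hf]; rfl
    have h2 : (∑ i, g i) = m₂.sum := by rw [← hg]; rfl
    rw [h1, h2, hm₁, hm₂, Multiset.sum_add, Multiset.sum_add,
      Multiset.sum_replicate]
    congr 1
    simpa using hdsum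
  have := hBh f g hfA hgA hsumfg
  rw [hf, hg] at this
  have hcount := congrArg (Multiset.count a₀) this
  rw [hm₁, hm₂, Multiset.count_add, Multiset.count_add,
    Multiset.count_replicate_self] at hcount
  have hca : Multiset.count a₀ d₁.val = 1 :=
    Multiset.count_eq_one_of_mem d₁.nodup ha₀
  have hcb : Multiset.count a₀ d₂.val = 0 := by
    rw [Multiset.count_eq_zero]
    intro h
    exact (Finset.mem_sdiff.mp h).2 (Finset.sdiff_subset ha₀)
  omega
end
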